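/- Let n and d be positive integers with d(d+1)+1 < n, and let t₁, …, t_d be integers with Σ tᵢ = n−1 and each tᵢ ≥ d+1. Let G′_t be the graph obtained from the disjoint union of complete graphs H₁, …, H_d of orders t₁, …, t_d by adding a new vertex u joined to all other vertices. Then every 2-proper partition of G′_t has at least d parts, and α*(G′_t) ≤ d. -/

import Mathlib

/-- Vertex type of the graph `G′_t`: a new vertex `u` (`none`) together with the
disjoint union of the vertex sets of complete graphs `H₁, …, H_d` of orders
`t 0, …, t (d−1)`. -/
abbrev GtV (d : ℕ) (t : Fin d → ℕ) := Option (Σ i : Fin d, Fin (t i))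

/-- Underlying edge relation of `G′_t`: each `Hᵢ` is complete (via `fromRel`), and
the vertex `u = none` is joined to all other vertices. -/
def gtRel' (d : ℕ) (t : Fin d → ℕ) : GtV d t → GtV d t → Bool
  | none, some _ => true
  | some ⟨i, _⟩, some ⟨i', _⟩ => i == i'
  | _, _ => false

/-- The graph `G′_t`. -/
def Gt' (d : ℕ) (t : Fin d → ℕ) : SimpleGraph (GtV d t) :=
  SimpleGraph.fromRel (fun x y => gtRel' d t x y = true)

instance {d : ℕ} {t : Fin d → ℕ} : DecidableRel (Gt' d t).Adj :=
  fun x y => decidable_of_iff _ (SimpleGraph.fromRel_adj _ x y).symm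

/-- A finite graph is 2-connected if it has more than 2 vertices and deleting any
set of fewer than 2 vertices leaves a connected graph. -/
def TwoConnected {W : Type*} [Fintype W] [DecidableEq W] (G : SimpleGraph W) : Prop :=
  2 < Fintype.card W ∧ G.Connected ∧ ∀ v : W, (G.induce {u : W | u ≠ v}).Connected

/-- `P` is a 2-proper partition of `G`. -/
def Is2ProperPartition {W : Type*} [Fintype W] [DecidableEq W] (G : SimpleGraph W)
    (P : Finset (Finset W)) : Prop :=
  (∀ p ∈ P, ∀ q ∈ P, p ≠ q → Disjoint p q) ∧
  P.sup id = Finset.univ ∧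
  ∀ p ∈ P, TwoConnected (G.induce (↑p : Set W))

/-- `I` is an independent set of `G`. -/
def IsIndep {V : Type*} (G : SimpleGraph V) (I : Finset V) : Prop :=
  ∀ u ∈ I, ∀ v ∈ I, u ≠ v → ¬ G.Adj u v

/-- `I` is a light independent set: its degree sum is at most `n − 1`. -/
def IsLight {V : Type*} [Fintype V] (G : SimpleGraph V) [DecidableRel G.Adj]
    (I : Finset V) : Prop :=
  ∑ u ∈ I, G.degree u ≤ Fintype.card V - 1

lemma SimpleGraph.Reachable.eq_of_forall_adj {V β : Type*} {G : SimpleGraph V} {f : V → β}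
    (hf : ∀ a b, G.Adj a b → f a = f b) {a b : V} (hab : G.Reachable a b) : f a = f b := by
  obtain ⟨w⟩ := hab
  induction w with
  | nil => rfl
  | cons hadj _ ih => exact (hf _ _ hadj).trans ih

lemma SimpleGraph.Preconnected.eq_of_forall_adj_induce {V β : Type*} {G : SimpleGraph V}
    {s : Set V} (hs : (G.induce s).Preconnected) {f : V → β}
    (hf : ∀ a ∈ s, ∀ b ∈ s, G.Adj a b → f a = f b) {a b : V} (ha : a ∈ s) (hb : b ∈ s) :
    f a = f b :=
  (hs ⟨a, ha⟩ ⟨b, hb⟩).eq_of_forall_adj (f := fun x : s => f x)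
    fun x y hxy => hf x x.2 y y.2 hxy

namespace Gt'

variable {d : ℕ} {t : Fin d → ℕ}

lemma none_adj_some (x : Σ i : Fin d, Fin (t i)) : (Gt' d t).Adj none (some x) := by
  simp [Gt', gtRel']

lemma some_adj_some_iff {x y : Σ i : Fin d, Fin (t i)} :
    (Gt' d t).Adj (some x) (some y) ↔ x ≠ y ∧ x.1 = y.1 := by
  simp only [Gt', SimpleGraph.fromRel_adj, gtRel', ne_eq, Option.some.injEq, beq_iff_eq]
  exact ⟨fun ⟨hne, h⟩ => ⟨hne, h.elim id Eq.symm⟩, fun ⟨hne, h⟩ => ⟨hne, .inl h⟩⟩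

lemma map_fst_eq_of_adj {x y : GtV d t} (hx : x ≠ none) (hy : y ≠ none)
    (hxy : (Gt' d t).Adj x y) : x.map Sigma.fst = y.map Sigma.fst := by
  cases x <;> cases y <;> simp_all [some_adj_some_iff]

/-- Deleting the apex `u = none` disconnects distinct cliques `Hᵢ`, `Hⱼ`; a 2-connected part
survives that deletion, so it meets at most one clique. -/
lemma fst_eq_of_twoConnected {p : Finset (GtV d t)}
    (hp : TwoConnected ((Gt' d t).induce (p : Set (GtV d t))))
    {x y : Σ i : Fin d, Fin (t i)} (hx : some x ∈ p) (hy : some y ∈ p) : x.1 = y.1 := by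
  suffices h : (some x : GtV d t).map Sigma.fst = (some y : GtV d t).map Sigma.fst by
    simpa using h
  by_cases hu : (none : GtV d t) ∈ p
  · let apex : (p : Set (GtV d t)) := ⟨none, hu⟩
    refine (hp.2.2 apex).preconnected.eq_of_forall_adj_induce
      (f := fun w : (p : Set (GtV d t)) => w.1.map Sigma.fst)
      (a := ⟨some x, hx⟩) (b := ⟨some y, hy⟩) ?_ (by simp [apex]) (by simp [apex])
    intro a ha b hb hab
    exact map_fst_eq_of_adj (fun h => ha (Subtype.ext h)) (fun h => hb (Subtype.ext h)) hab
  · refine hp.2.1.preconnected.eq_of_forall_adj_induce ?_ hx hy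
    exact fun a ha b hb => map_fst_eq_of_adj (ne_of_mem_of_not_mem ha hu)
      (ne_of_mem_of_not_mem hb hu)

lemma card_le_of_is2ProperPartition (ht : ∀ i, 0 < t i) {P : Finset (Finset (GtV d t))}
    (hP : Is2ProperPartition (Gt' d t) P) : d ≤ P.card := by
  obtain ⟨-, hcover, htwo⟩ := hP
  have hpart (i : Fin d) : ∃ p ∈ P, (some ⟨i, ⟨0, ht i⟩⟩ : GtV d t) ∈ p := by
    simpa using Finset.mem_sup.mp (hcover ▸ Finset.mem_univ (some ⟨i, ⟨0, ht i⟩⟩ : GtV d t))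
  choose part hpartP hmem using hpart
  simpa using Finset.card_le_card_of_injOn (s := Finset.univ) part (fun i _ => hpartP i)
    fun i _ j _ hij => fst_eq_of_twoConnected (htwo _ (hpartP i)) (hmem i) (hij ▸ hmem j)

/-- An independent set either is `{u}` or picks at most one vertex from each clique `Hᵢ`. -/
lemma card_le_of_isIndep (hd : 0 < d) {I : Finset (GtV d t)} (hI : IsIndep (Gt' d t) I) :
    I.card ≤ d := by
  by_cases hu : none ∈ I
  · have hI1 : I = {none} := Finset.eq_singleton_iff_unique_mem.mpr ⟨hu, fun x hx => by
      by_contra hx0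
      obtain ⟨x, rfl⟩ := Option.ne_none_iff_exists'.mp hx0
      exact hI none hu (some x) hx (by simp) (none_adj_some x)⟩
    simpa [hI1] using Nat.one_le_of_lt hd
  · have hinj : Set.InjOn Sigma.fst (I.eraseNone : Set (Σ i : Fin d, Fin (t i))) := by
      intro x hx y hy hxy
      by_contra hne
      exact hI _ (Finset.mem_eraseNone.mp hx) _ (Finset.mem_eraseNone.mp hy) (by simpa using hne)
        (some_adj_some_iff.mpr ⟨hne, hxy⟩)
    rw [← Finset.card_eraseNone_of_not_mem hu]
    simpa using Finset.card_le_card_of_injOn Sigma.fst (fun _ _ => Finset.mem_univ _) hinj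

end Gt'

theorem stmt13_general (d : ℕ) (t : Fin d → ℕ) (hd : 0 < d) (ht : ∀ i, d + 1 ≤ t i) :
    (∀ P : Finset (Finset (GtV d t)), Is2ProperPartition (Gt' d t) P → d ≤ P.card) ∧
    (∀ I : Finset (GtV d t), IsIndep (Gt' d t) I → IsLight (Gt' d t) I →
      I.card ≤ d) :=
  ⟨fun _ hP => Gt'.card_le_of_is2ProperPartition (fun i => (Nat.succ_pos d).trans_le (ht i)) hP,
    fun _ hI _ => Gt'.card_le_of_isIndep hd hI⟩

/-- Let `n, d` be positive integers with `d(d+1)+1 < n` and let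
`t₁, …, t_d` be integers with `Σ tᵢ = n − 1` and each `tᵢ ≥ d + 1`. Then every
2-proper partition of `G′_t` has at least `d` parts, and `α*(G′_t) ≤ d` (every
light independent set has at most `d` vertices). -/
theorem stmt13 (n d : ℕ) (t : Fin d → ℕ) (hd : 0 < d) (hn : d * (d + 1) + 1 < n)
    (hsum : ∑ i, t i = n - 1) (ht : ∀ i, d + 1 ≤ t i) :
    (∀ P : Finset (Finset (GtV d t)), Is2ProperPartition (Gt' d t) P → d ≤ P.card) ∧
    (∀ I : Finset (GtV d t), IsIndep (Gt' d t) I → IsLight (Gt' d t) I →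
      I.card ≤ d) :=
  stmt13_general d t hd ht
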